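/- Every block graph G is b*-monotonic: for every induced subgraph H_1 of G and every induced subgraph H_2 of H_1 (both with at least one vertex), b*(H_2) ≤ b*(H_1). -/

import Mathlib

variable {V : Type*} {W : Type*}

/-- A proper coloring of `G` using colors `{1, …, k}`: colors lie in `{1,…,k}`,
adjacent vertices get different colors, and every color in `{1,…,k}` is used. -/
def IsProperKColoring (G : SimpleGraph V) (k : ℕ) (c : V → ℕ) : Prop :=
  (∀ v, c v ∈ Set.Icc 1 k) ∧
  (∀ u v, G.Adj u v → c u ≠ c v) ∧
  (∀ j ∈ Set.Icc 1 k, ∃ v, c v = j)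

/-- `u` is a b-vertex: every color `j ∈ {1,…,k}` with `j ≠ c u` appears on a neighbor of `u`. -/
def IsBVertex (G : SimpleGraph V) (k : ℕ) (c : V → ℕ) (u : V) : Prop :=
  ∀ j ∈ Set.Icc 1 k, j ≠ c u → ∃ w, G.Adj u w ∧ c w = j

/-- `u` is a nice vertex: it is a b-vertex and for every color `j ≠ c u` in `{1,…,k}`
it has a b-vertex neighbor of color `j`. -/
def IsNiceVertex (G : SimpleGraph V) (k : ℕ) (c : V → ℕ) (u : V) : Prop :=
  IsBVertex G k c u ∧
  ∀ j ∈ Set.Icc 1 k, j ≠ c u → ∃ w, G.Adj u w ∧ c w = j ∧ IsBVertex G k c w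

/-- A Grundy coloring using `k` colors: proper, and every vertex of color `j` has a
neighbor of each smaller color `i ≥ 1`. -/
def IsGrundyColoring (G : SimpleGraph V) (k : ℕ) (c : V → ℕ) : Prop :=
  IsProperKColoring G k c ∧
  ∀ i j : ℕ, 1 ≤ i → i < j → j ≤ k → ∀ v, c v = j → ∃ w, G.Adj v w ∧ c w = i

/-- A z-coloring: a Grundy coloring with a nice vertex of (top) color `k`. -/
def IsZColoring (G : SimpleGraph V) (k : ℕ) (c : V → ℕ) : Prop :=
  IsGrundyColoring G k c ∧ ∃ u, c u = k ∧ IsNiceVertex G k c u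

/-- A b*-coloring: a proper coloring with a nice vertex of (top) color `k`. -/
def IsBStarColoring (G : SimpleGraph V) (k : ℕ) (c : V → ℕ) : Prop :=
  IsProperKColoring G k c ∧ ∃ u, c u = k ∧ IsNiceVertex G k c u

/-- The z-chromatic number: largest `k` admitting a z-coloring with `k` colors. -/
noncomputable def zNum (G : SimpleGraph V) : ℕ :=
  sSup {k | ∃ c : V → ℕ, IsZColoring G k c}

/-- The b*-chromatic number: largest `k` admitting a b*-coloring with `k` colors. -/
noncomputable def bStar (G : SimpleGraph V) : ℕ :=
  sSup {k | ∃ c : V → ℕ, IsBStarColoring G k c}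

/-- `m*(G)`: the largest `k` such that some vertex `u` has `k` distinct neighbors,
each of degree at least `k`. -/
noncomputable def mStar (G : SimpleGraph V) : ℕ :=
  sSup {k | ∃ (u : V) (s : Finset V), (↑s : Set V) ⊆ G.neighborSet u ∧ s.card = k ∧
    ∀ v ∈ s, k ≤ (G.neighborSet v).ncard}

/-- The clique number `ω(G)`. -/
noncomputable def omegaNum (G : SimpleGraph V) : ℕ :=
  sSup {n | ∃ s : Finset V, G.IsNClique n s}
/-- `B` is (the vertex set of) a block of `G`: a maximal set of vertices inducing a
connected subgraph with no cut vertex. -/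
def IsBlockSet (G : SimpleGraph V) (B : Set V) : Prop :=
  B.Nonempty ∧ (G.induce B).Connected ∧
  (∀ v ∈ B, (G.induce (B \ {v})).Preconnected) ∧
  ∀ B' : Set V, B ⊆ B' → (G.induce B').Connected →
    (∀ v ∈ B', (G.induce (B' \ {v})).Preconnected) → B' = B

/-- A block graph: every block is a clique. -/
def IsBlockGraph (G : SimpleGraph V) : Prop :=
  ∀ B : Set V, IsBlockSet G B → G.IsClique B

/-!
A nice vertex of a b*-colouring with `k` colours has `k - 1` b-vertex neighbours, each of degree
at least `k - 1`; hence `b*(H) ≤ m*(H) + 1` for every finite graph, and `m*` is monotone under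
induced subgraphs. The reverse inequality `m*(H) + 1 ≤ b*(H)` holds when every cycle of `H` spans
a clique, which is the case for (induced subgraphs of) block graphs. Given a vertex `u` with
witnesses `s`, `|s| = m*`, colour `u` with `m* + 1` and `s` bijectively with `1, …, m*`. The
neighbourhood of `u` is a disjoint union of cliques and every vertex outside `N[u]` sees at most one
neighbour of `u`, so each witness `w` can receive its still missing colours on private neighbours
outside `N[u]`; there are enough of them because `deg w ≥ m*` and `ω ≤ m* + 1`. Finally, the
neighbours of a new vertex inside a set that meets each component connectedly form a clique, so
such a partial colouring extends greedily with `ω ≤ m* + 1` colours.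
-/

section ChromaticBounds

variable {G : SimpleGraph V}

variable (G) in
lemma mStar_bddAbove [Finite V] :
    BddAbove {k | ∃ (u : V) (s : Finset V), (↑s : Set V) ⊆ G.neighborSet u ∧ s.card = k ∧
      ∀ v ∈ s, k ≤ (G.neighborSet v).ncard} := by
  refine ⟨Nat.card V, ?_⟩
  rintro _ ⟨u, s, -, rfl, -⟩
  exact (Set.ncard_coe_finset s).symm.trans_le (Set.ncard_le_card _)

lemma le_mStar [Finite V] {u : V} {T : Set V} (hT : T ⊆ G.neighborSet u) {k : ℕ}
    (hk : k ≤ T.ncard) (hdeg : ∀ v ∈ T, k ≤ (G.neighborSet v).ncard) : k ≤ mStar G := by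
  obtain ⟨s, hsT, hs⟩ := Set.exists_subset_card_eq hk
  have hfin : s.Finite := (Set.toFinite T).subset hsT
  refine le_csSup (mStar_bddAbove G) ⟨u, hfin.toFinset, ?_, ?_, ?_⟩
  · simpa using hsT.trans hT
  · rw [← hs, Set.ncard_eq_toFinset_card s hfin]
  · intro v hv
    exact hdeg v (hsT (hfin.mem_toFinset.mp hv))

lemma mStar_le_of_embedding [Finite W] {G' : SimpleGraph W} (f : G ↪g G') :
    mStar G ≤ mStar G' := by
  refine csSup_le' ?_
  rintro k ⟨u, s, hs, rfl, hdeg⟩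
  refine le_mStar (u := f u) (T := f '' s) ?_ ?_ ?_
  · rintro _ ⟨v, hv, rfl⟩
    exact f.map_rel_iff.mpr (hs hv)
  · rw [Set.ncard_image_of_injective _ f.injective, Set.ncard_coe_finset]
  · rintro _ ⟨v, hv, rfl⟩
    refine (hdeg v hv).trans (Set.ncard_le_ncard_of_injOn f ?_ f.injective.injOn)
    exact fun w hw => f.map_rel_iff.mpr hw

lemma IsBVertex.sub_one_le_ncard_neighborSet [Finite V] {k : ℕ} {c : V → ℕ} {v : V}
    (hv : IsBVertex G k c v) (hcv : c v ∈ Set.Icc 1 k) : k - 1 ≤ (G.neighborSet v).ncard := by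
  have hsub : Set.Icc 1 k \ {c v} ⊆ c '' G.neighborSet v := by
    rintro j ⟨hj, hjv⟩
    obtain ⟨w, hvw, rfl⟩ := hv j hj hjv
    exact ⟨w, hvw, rfl⟩
  calc k - 1 = (Set.Icc 1 k \ {c v}).ncard := by
        rw [Set.ncard_sdiff_singleton_of_mem hcv, Set.ncard_Icc_nat]; omega
    _ ≤ (c '' G.neighborSet v).ncard := Set.ncard_le_ncard hsub (Set.toFinite _)
    _ ≤ (G.neighborSet v).ncard := Set.ncard_image_le (Set.toFinite _)

lemma IsBStarColoring.le_mStar_add_one [Finite V] {k : ℕ} {c : V → ℕ}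
    (h : IsBStarColoring G k c) : k ≤ mStar G + 1 := by
  obtain ⟨⟨hrange, -, -⟩, u, hu, -, hnice⟩ := h
  set T := {w | G.Adj u w ∧ IsBVertex G k c w}
  have hsub : Set.Icc 1 (k - 1) ⊆ c '' T := by
    intro j hj
    obtain ⟨w, huw, hwj, hw⟩ := hnice j ⟨hj.1, by grind⟩ (by grind)
    exact ⟨w, ⟨huw, hw⟩, hwj⟩
  have hT : k - 1 ≤ T.ncard :=
    calc k - 1 = (Set.Icc 1 (k - 1)).ncard := by rw [Set.ncard_Icc_nat]; omega
      _ ≤ (c '' T).ncard := Set.ncard_le_ncard hsub (Set.toFinite _)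
      _ ≤ T.ncard := Set.ncard_image_le (Set.toFinite _)
  have := le_mStar (fun w hw => hw.1) hT fun w hw => hw.2.sub_one_le_ncard_neighborSet (hrange w)
  omega

variable (G) in
lemma bStar_le_mStar_add_one [Finite V] : bStar G ≤ mStar G + 1 :=
  csSup_le' fun _ ⟨_, hc⟩ => hc.le_mStar_add_one

variable (G) in
lemma cliqueNum_le_mStar_add_one [Finite V] : G.cliqueNum ≤ mStar G + 1 := by
  obtain ⟨t, ht⟩ := G.exists_isNClique_cliqueNum
  rcases t.eq_empty_or_nonempty with rfl | ⟨u, hu⟩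
  · simp [← ht.card_eq]
  have hcard : ∀ v ∈ t, ((t : Set V) \ {v}).ncard = G.cliqueNum - 1 := fun v hv => by
    rw [Set.ncard_sdiff_singleton_of_mem (by simpa using hv), Set.ncard_coe_finset, ht.card_eq]
  have hnbr : ∀ v ∈ t, (t : Set V) \ {v} ⊆ G.neighborSet v := fun v hv w ⟨hw, hwv⟩ =>
    ht.isClique (by simpa using hv) hw (Ne.symm hwv)
  have := le_mStar (hnbr u hu) (hcard u hu).ge fun v ⟨hv, _⟩ =>
    (hcard v hv).symm.trans_le (Set.ncard_le_ncard (hnbr v hv) (Set.toFinite _))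
  omega

lemma isBStarColoring_of_isBVertex {u : V} {s : Set V} (hs : s ⊆ G.neighborSet u) {k : ℕ}
    {c : V → ℕ} (hrange : ∀ x, c x ∈ Set.Icc 1 (k + 1)) (hproper : ∀ x y, G.Adj x y → c x ≠ c y)
    (hcu : c u = k + 1) (hcs : Set.SurjOn c s (Set.Icc 1 k))
    (hbv : ∀ w ∈ s, IsBVertex G (k + 1) c w) : IsBStarColoring G (k + 1) c := by
  have hcolor : ∀ j ∈ Set.Icc 1 (k + 1), j ≠ c u → ∃ w ∈ s, c w = j := fun j hj hju => by
    obtain ⟨w, hw, rfl⟩ := hcs ⟨hj.1, by grind⟩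
    exact ⟨w, hw, rfl⟩
  refine ⟨⟨hrange, hproper, fun j hj => ?_⟩, u, hcu, fun j hj hju => ?_, fun j hj hju => ?_⟩
  · by_cases hju : j = c u
    · exact ⟨u, hju.symm⟩
    · obtain ⟨w, -, hwj⟩ := hcolor j hj hju
      exact ⟨w, hwj⟩
  · obtain ⟨w, hw, hwj⟩ := hcolor j hj hju
    exact ⟨w, hs hw, hwj⟩
  · obtain ⟨w, hw, hwj⟩ := hcolor j hj hju
    exact ⟨w, hs hw, hwj, hbv w hw⟩

end ChromaticBounds

namespace SimpleGraph

variable {G : SimpleGraph V}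

def CyclesSpanCliques (G : SimpleGraph V) : Prop :=
  ∀ ⦃a : V⦄ (c : G.Walk a a), c.IsCycle → G.IsClique {x | x ∈ c.support}

lemma Walk.IsCycle.preconnected_induce_support_diff {u v : V} {c : G.Walk u u} (hc : c.IsCycle)
    (hv : v ∈ c.support) : (G.induce ({x | x ∈ c.support} \ {v})).Preconnected := by
  classical
  set d := c.rotate v hv
  have hd : d.IsCycle := hc.rotate hv
  have htail : d.tail.support = d.tail.dropLast.support ++ [v] :=
    (Walk.support_dropLast_concat (by
      rw [← Walk.length_eq_zero_iff, Walk.length_tail]; have := hd.three_le_length; omega)).symm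
  have hnodup : d.tail.support.Nodup := hd.isPath_tail.support_nodup
  rw [htail, List.nodup_append] at hnodup
  have hsupp : ∀ x, x ∈ c.support ↔ x ∈ v :: (d.tail.dropLast.support ++ [v]) := by
    intro x
    rw [← htail, Walk.cons_support_tail hd.not_nil, Walk.mem_support_rotate_iff]
  have key : {x | x ∈ c.support} \ {v} = {x | x ∈ d.tail.dropLast.support} := by
    ext x
    simp only [Set.mem_sdiff, Set.mem_ofPred_eq, Set.mem_singleton_iff, hsupp]
    constructor
    · rintro ⟨hx, hxv⟩
      simpa [hxv] using hx
    · intro hx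
      exact ⟨by simp [hx], fun h => hnodup.2.2 _ hx v (by simp) h⟩
  rw [key]
  exact d.tail.dropLast.connected_induce_support.preconnected

lemma exists_isBlockSet_superset [Finite V] {C : Set V} (hconn : (G.induce C).Connected)
    (hcut : ∀ v ∈ C, (G.induce (C \ {v})).Preconnected) : ∃ B, C ⊆ B ∧ IsBlockSet G B := by
  let P : Set (Set V) := {B | C ⊆ B ∧ (G.induce B).Connected ∧
    ∀ v ∈ B, (G.induce (B \ {v})).Preconnected}
  obtain ⟨B, hCB, hmax⟩ := (Set.toFinite P).exists_le_maximal (a := C) ⟨subset_rfl, hconn, hcut⟩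
  obtain ⟨-, hBconn, hBcut⟩ := hmax.prop
  refine ⟨B, hCB, ?_, hBconn, hBcut, fun B' hBB' hconn' hcut' => ?_⟩
  · obtain ⟨⟨x, hx⟩⟩ := hBconn.nonempty
    exact ⟨x, hx⟩
  · exact (hmax.eq_of_le ⟨hCB.trans hBB', hconn', hcut'⟩ hBB').symm

lemma _root_.IsBlockGraph.cyclesSpanCliques [Finite V] (hG : IsBlockGraph G) :
    G.CyclesSpanCliques := fun _ c hc => by
  obtain ⟨B, hCB, hB⟩ := exists_isBlockSet_superset c.connected_induce_support
    (fun _ hv => hc.preconnected_induce_support_diff hv)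
  exact (hG B hB).subset hCB

lemma CyclesSpanCliques.induce (hG : G.CyclesSpanCliques) (s : Set V) :
    (G.induce s).CyclesSpanCliques := by
  intro a c hc x hx y hy hxy
  have := hG (c.map (Embedding.induce s).toHom) (hc.map (Embedding.induce (G := G) s).injective)
  exact this (by simp only [Walk.support_map]; exact List.mem_map_of_mem hx)
    (by simp only [Walk.support_map]; exact List.mem_map_of_mem hy) (Subtype.coe_ne_coe.mpr hxy)

lemma CyclesSpanCliques.adj_of_walk (hG : G.CyclesSpanCliques) {x y z : V} (hxy : G.Adj x y)
    (hxz : G.Adj x z) (hyz : y ≠ z) (p : G.Walk y z) (hx : x ∉ p.support) : G.Adj y z := by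
  classical
  have hxp : x ∉ p.bypass.support := fun h => hx (p.support_bypass_subset_support h)
  have hcyc : (Walk.cons hxy (p.bypass.concat hxz.symm)).IsCycle := by
    rw [Walk.cons_isCycle_iff, Walk.edges_concat, List.concat_eq_append]
    refine ⟨p.bypass_isPath.concat hxp _, fun h => ?_⟩
    rcases List.mem_append.mp h with h | h
    · exact hxp (p.bypass.fst_mem_support_of_mem_edges h)
    · rcases Sym2.eq_iff.mp (List.mem_singleton.mp h) with ⟨rfl, -⟩ | ⟨-, rfl⟩
      · exact hxz.ne rfl
      · exact hyz rfl
  exact hG _ hcyc (by simp) (by simp) hyz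

/-- `S` meets every connected component of `G` in a connected (possibly empty) set. -/
def ReachableWithin (G : SimpleGraph V) (S : Set V) : Prop :=
  ∀ ⦃x⦄ (hx : x ∈ S) ⦃y⦄ (hy : y ∈ S), G.Reachable x y → (G.induce S).Reachable ⟨x, hx⟩ ⟨y, hy⟩

lemma reachableWithin_of_reachable_center {S : Set V} {u : V} (hu : u ∈ S)
    (h : ∀ x (hx : x ∈ S), (G.induce S).Reachable ⟨u, hu⟩ ⟨x, hx⟩) : G.ReachableWithin S :=
  fun x hx y hy _ => (h x hx).symm.trans (h y hy)

lemma CyclesSpanCliques.isClique_neighborSet_inter (hG : G.CyclesSpanCliques) {S : Set V}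
    (hS : G.ReachableWithin S) {x : V} (hx : x ∉ S) : G.IsClique (G.neighborSet x ∩ S) := by
  rintro y ⟨hxy, hy⟩ z ⟨hxz, hz⟩ hyz
  obtain ⟨p⟩ := hS hy hz (hxy.reachable.symm.trans hxz.reachable)
  let q := p.map (Embedding.induce (G := G) S).toHom
  have hq : ∀ v ∈ q.support, v ∈ S := by
    simp only [q, Walk.support_map, List.mem_map]
    rintro _ ⟨v, -, rfl⟩
    exact v.2
  exact hG.adj_of_walk hxy hxz hyz q fun hxq => hx (hq x hxq)

lemma reachableWithin_insert {S : Set V} (hS : G.ReachableWithin S) {x : V}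
    (hx : ∀ y ∈ S, G.Reachable x y → ∃ z ∈ S, G.Adj x z) : G.ReachableWithin (insert x S) := by
  have hmap : ∀ {a b : V} (ha : a ∈ S) (hb : b ∈ S), G.Reachable a b →
      (G.induce (insert x S)).Reachable ⟨a, .inr ha⟩ ⟨b, .inr hb⟩ := fun ha hb hab =>
    (hS ha hb hab).map (induceHomOfLE (G := G) (Set.subset_insert x S)).toHom
  have hfrom_x : ∀ {b : V} (hb : b ∈ S), G.Reachable x b →
      (G.induce (insert x S)).Reachable ⟨x, .inl rfl⟩ ⟨b, .inr hb⟩ := by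
    intro b hb hxb
    obtain ⟨z, hz, hxz⟩ := hx b hb hxb
    exact (Adj.reachable (G := G.induce (insert x S)) (u := ⟨x, .inl rfl⟩) (v := ⟨z, .inr hz⟩)
      hxz).trans (hmap hz hb (hxz.reachable.symm.trans hxb))
  rintro a (rfl | ha) b (rfl | hb) hab
  · rfl
  · exact hfrom_x hb hab
  · exact (hfrom_x ha hab.symm).symm
  · exact hmap ha hb hab

lemma ReachableWithin.exists_insert {S : Set V} (hS : G.ReachableWithin S) (hSV : S ≠ Set.univ) :
    ∃ x ∉ S, G.ReachableWithin (insert x S) := by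
  by_cases hbd : ∃ x ∉ S, ∃ z ∈ S, G.Adj x z
  · obtain ⟨x, hx, z, hz, hxz⟩ := hbd
    exact ⟨x, hx, reachableWithin_insert hS fun _ _ _ => ⟨z, hz, hxz⟩⟩
  · push Not at hbd
    obtain ⟨x, hx⟩ := (Set.ne_univ_iff_exists_notMem S).mp hSV
    refine ⟨x, hx, reachableWithin_insert hS fun y hy ⟨p⟩ => ?_⟩
    obtain ⟨d, -, hd, hd'⟩ := p.reverse.exists_boundary_dart S hy hx
    exact absurd d.adj.symm (hbd _ hd' _ hd)

lemma IsClique.ncard_le_cliqueNum [Finite V] {s : Set V} (hs : G.IsClique s) :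
    s.ncard ≤ G.cliqueNum := by
  have hfin := s.toFinite
  rw [Set.ncard_eq_toFinset_card s hfin]
  exact IsClique.card_le_cliqueNum (tc := by simpa using hs)

lemma CyclesSpanCliques.exists_color_not_mem_neighbors [Finite V] (hG : G.CyclesSpanCliques)
    {n : ℕ} (hω : G.cliqueNum ≤ n) {S : Set V} (hS : G.ReachableWithin S) {x : V} (hx : x ∉ S)
    (c : V → ℕ) : ∃ j ∈ Set.Icc 1 n, ∀ y ∈ S, G.Adj x y → c y ≠ j := by
  set K := G.neighborSet x ∩ S
  have hK : (insert x K).ncard ≤ n :=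
    (((hG.isClique_neighborSet_inter hS hx).insert fun _ hb _ => hb.1).ncard_le_cliqueNum).trans hω
  rw [Set.ncard_insert_of_notMem (fun h => hx h.2)] at hK
  have hlt : (c '' K).ncard < (Set.Icc 1 n).ncard := by
    rw [Set.ncard_Icc_nat]
    have := Set.ncard_image_le (f := c) (s := K) (Set.toFinite K)
    omega
  obtain ⟨j, hj, hjK⟩ := Set.exists_mem_notMem_of_ncard_lt_ncard hlt
  exact ⟨j, hj, fun y hy hxy hyj => hjK ⟨y, ⟨hxy, hy⟩, hyj⟩⟩

theorem CyclesSpanCliques.exists_extend_coloring [Finite V] (hG : G.CyclesSpanCliques) {n : ℕ}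
    (hω : G.cliqueNum ≤ n) {S : Set V} (hS : G.ReachableWithin S) {c : V → ℕ}
    (hc : Set.MapsTo c S (Set.Icc 1 n)) (hprop : ∀ x ∈ S, ∀ y ∈ S, G.Adj x y → c x ≠ c y) :
    ∃ c' : V → ℕ, Set.EqOn c' c S ∧ (∀ x, c' x ∈ Set.Icc 1 n) ∧
      ∀ x y, G.Adj x y → c' x ≠ c' y := by
  classical
  induction hm : Sᶜ.ncard generalizing S c with
  | zero =>
    have hSV : S = Set.univ := by
      simpa using (Set.ncard_eq_zero (Set.toFinite Sᶜ)).mp hm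
    subst hSV
    exact ⟨c, Set.eqOn_refl _ _, fun x => hc trivial, fun x y => hprop x trivial y trivial⟩
  | succ m ih =>
    have hSV : S ≠ Set.univ := by
      rintro rfl
      simp at hm
    obtain ⟨x, hx, hxS⟩ := hS.exists_insert hSV
    obtain ⟨j, hj, hjS⟩ := hG.exists_color_not_mem_neighbors hω hS hx c
    have hupd : ∀ y ∈ S, Function.update c x j y = c y := fun y hy =>
      Function.update_of_ne (by rintro rfl; exact hx hy) _ _
    have hc' : Set.MapsTo (Function.update c x j) (insert x S) (Set.Icc 1 n) := by
      rintro y (rfl | hy)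
      · simpa using hj
      · rw [hupd y hy]; exact hc hy
    have hprop' : ∀ y ∈ insert x S, ∀ z ∈ insert x S, G.Adj y z →
        Function.update c x j y ≠ Function.update c x j z := by
      rintro y (rfl | hy) z (rfl | hz) hyz
      · exact absurd hyz (G.loopless.irrefl _)
      · rw [hupd z hz, Function.update_self]; exact (hjS z hz hyz).symm
      · rw [hupd y hy, Function.update_self]; exact hjS y hy hyz.symm
      · rw [hupd y hy, hupd z hz]; exact hprop y hy z hz hyz
    have hm' : (insert x S)ᶜ.ncard = m := by
      have : (insert x S)ᶜ = Sᶜ \ {x} := by ext; simp [and_comm]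
      rw [this, Set.ncard_sdiff_singleton_of_mem hx, hm]; rfl
    obtain ⟨c', hc'eq, hrange, hproper⟩ := ih hxS hc' hprop' hm'
    exact ⟨c', fun y hy => (hc'eq (Set.mem_insert_of_mem x hy)).trans (hupd y hy), hrange, hproper⟩

lemma CyclesSpanCliques.isClique_insert_neighborSet_inter (hG : G.CyclesSpanCliques) {u w : V}
    (huw : G.Adj u w) : G.IsClique (insert w (G.neighborSet w ∩ G.neighborSet u)) := by
  refine IsClique.insert (fun y hy z hz hyz => ?_) fun _ hb _ => hb.1
  have hwy : G.Adj w y := hy.1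
  have huz : G.Adj u z := hz.2
  refine hG.adj_of_walk hwy hz.1 hyz (.cons (G.adj_symm hy.2) (.cons huz .nil)) ?_
  simp [huw.ne', hwy.ne, (G.adj_symm hz.1).ne']

lemma CyclesSpanCliques.eq_of_adj_of_adj (hG : G.CyclesSpanCliques) {u x y z : V}
    (hx : x ∉ insert u (G.neighborSet u)) (huy : G.Adj u y) (huz : G.Adj u z) (hxy : G.Adj x y)
    (hxz : G.Adj x z) : y = z := by
  by_contra hyz
  rw [Set.mem_insert_iff, not_or] at hx
  refine hx.2 (G.adj_symm (hG.adj_of_walk (G.adj_symm hxy) (G.adj_symm huy) hx.1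
    (.cons hxz (.cons (G.adj_symm huz) .nil)) ?_))
  simp [hyz, (G.adj_symm hxy).ne, huy.ne']

lemma CyclesSpanCliques.not_adj_of_ne (hG : G.CyclesSpanCliques) {u w w' x x' : V}
    (huw : G.Adj u w) (huw' : G.Adj u w') (hww' : w ≠ w') (hwx : G.Adj w x) (hw'x' : G.Adj w' x')
    (hx : x ∉ insert u (G.neighborSet u)) (hx' : x' ∉ insert u (G.neighborSet u)) :
    ¬ G.Adj x x' := by
  intro hxx'
  rw [Set.mem_insert_iff, not_or] at hx hx'
  refine hx.2 (hG.adj_of_walk (G.adj_symm huw) hwx (Ne.symm hx.1)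
    (.cons huw' (.cons hw'x' (.cons (G.adj_symm hxx') .nil))) ?_)
  have hw'x' : w ≠ x' := fun h => hx'.2 (h ▸ huw)
  simp [huw.ne', hww', hw'x', hwx.ne]

lemma CyclesSpanCliques.exists_coloring_bijOn_neighbors [Finite V] (hG : G.CyclesSpanCliques)
    {u : V} {s : Set V} (hs : s ⊆ G.neighborSet u) {k : ℕ} (hsk : s.ncard = k)
    (hω : G.cliqueNum ≤ k + 1) :
    ∃ c : V → ℕ, c u = k + 1 ∧ Set.BijOn c s (Set.Icc 1 k) ∧ (∀ x, c x ∈ Set.Icc 1 (k + 1)) ∧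
      ∀ x y, G.Adj x y → c x ≠ c y := by
  classical
  obtain ⟨e, he⟩ : ∃ e : V → ℕ, Set.BijOn e s (Set.Icc 1 k) := by
    refine (Set.toFinite s).exists_bijOn_of_encard_eq ?_
    rw [← (Set.toFinite s).cast_ncard_eq, ← (Set.toFinite _).cast_ncard_eq, hsk,
      Set.ncard_Icc_nat, Nat.add_sub_cancel]
  have hus : u ∉ s := fun h => G.loopless.irrefl u (hs h)
  have hupd : Set.EqOn (Function.update e u (k + 1)) e s := fun w hw =>
    Function.update_of_ne (by rintro rfl; exact hus hw) _ _
  have hS : G.ReachableWithin (insert u s) := by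
    refine reachableWithin_of_reachable_center (.inl rfl) ?_
    rintro x (rfl | hx)
    · rfl
    · exact Adj.reachable (G := G.induce _) (hs hx)
  obtain ⟨c, hc, hrange, hproper⟩ :=
    hG.exists_extend_coloring hω hS (c := Function.update e u (k + 1))
    (by
      rintro x (rfl | hx)
      · simp
      · rw [hupd hx]; exact Set.Icc_subset_Icc_right (Nat.le_succ k) (he.mapsTo hx))
    (by
      rintro x (rfl | hx) y (rfl | hy) hxy
      · exact absurd hxy (G.loopless.irrefl _)
      · rw [hupd hy, Function.update_self]; exact ((he.mapsTo hy).2.trans_lt k.lt_succ_self).ne'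
      · rw [hupd hx, Function.update_self]; exact ((he.mapsTo hx).2.trans_lt k.lt_succ_self).ne
      · rw [hupd hx, hupd hy]; exact he.injOn.ne hx hy hxy.ne)
  refine ⟨c, ?_, he.congr ((hc.mono (Set.subset_insert u s)).trans hupd).symm, hrange, hproper⟩
  rw [hc (Set.mem_insert u s), Function.update_self]

lemma CyclesSpanCliques.ncard_missing_le [Finite V] (hG : G.CyclesSpanCliques) {u w : V}
    (huw : G.Adj u w) {k : ℕ} {c : V → ℕ} (hcu : c u = k + 1)
    (hrange : ∀ x, c x ∈ Set.Icc 1 (k + 1)) (hproper : ∀ x y, G.Adj x y → c x ≠ c y)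
    (hdeg : k ≤ (G.neighborSet w).ncard) :
    (Set.Icc 1 k \ c '' insert w (G.neighborSet w ∩ G.neighborSet u)).ncard ≤
      (G.neighborSet w \ insert u (G.neighborSet u)).ncard := by
  set A := G.neighborSet w ∩ G.neighborSet u
  have hinj : Set.InjOn c (insert w A) := fun a ha b hb hab => by
    by_contra hne
    exact hproper a b (hG.isClique_insert_neighborSet_inter huw ha hb hne) hab
  have hsub : c '' insert w A ⊆ Set.Icc 1 k := by
    rintro _ ⟨a, ha, rfl⟩
    have hua : G.Adj u a := by rcases ha with rfl | ha; exacts [huw, ha.2]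
    have := hproper u a hua
    have := hrange a
    simp only [Set.mem_Icc] at this ⊢
    omega
  have hwA : w ∉ A := fun h => G.loopless.irrefl w h.1
  have hnbr : G.neighborSet w ⊆ insert u (A ∪ (G.neighborSet w \ insert u (G.neighborSet u))) := by
    intro x hx
    by_cases hxu : x = u
    · exact .inl hxu
    by_cases hux : G.Adj u x
    · exact .inr (.inl ⟨hx, hux⟩)
    · exact .inr (.inr ⟨hx, by simp [hxu, hux]⟩)
  have hdeg' := (Set.ncard_le_ncard hnbr (Set.toFinite _)).trans ((Set.ncard_insert_le _ _).trans
    (Nat.add_le_add_right (Set.ncard_union_le _ _) 1))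
  rw [Set.ncard_sdiff hsub, hinj.ncard_image, Set.ncard_insert_of_notMem hwA, Set.ncard_Icc_nat]
  omega

lemma CyclesSpanCliques.extend_ne_of_adj (hG : G.CyclesSpanCliques) {u : V} {ι : Type*}
    {Φ : ι → V} (hΦ : Function.Injective Φ) {owner : ι → V} {col : ι → ℕ} {c : V → ℕ}
    (hproper : ∀ x y, G.Adj x y → c x ≠ c y) (howner : ∀ i, G.Adj u (owner i))
    (hΦadj : ∀ i, G.Adj (owner i) (Φ i)) (hΦnbr : ∀ i, Φ i ∉ insert u (G.neighborSet u))
    (hcol : ∀ i, col i ≠ c (owner i)) (hcol_inj : ∀ i j, owner i = owner j → col i = col j → i = j)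
    {x y : V} (hx : x ∈ insert u (G.neighborSet u) ∪ Set.range Φ)
    (hy : y ∈ insert u (G.neighborSet u) ∪ Set.range Φ) (hxy : G.Adj x y) :
    Function.extend Φ col c x ≠ Function.extend Φ col c y := by
  have hnbr : ∀ z ∈ insert u (G.neighborSet u), Function.extend Φ col c z = c z :=
    fun z hz => Function.extend_apply' _ _ _ (by rintro ⟨i, rfl⟩; exact hΦnbr i hz)
  have hmixed : ∀ z ∈ insert u (G.neighborSet u), ∀ i, G.Adj z (Φ i) → c z ≠ col i := by
    rintro z (rfl | huz) i hzi
    · exact absurd (.inr hzi) (hΦnbr i)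
    · rw [hG.eq_of_adj_of_adj (hΦnbr i) huz (howner i) (G.adj_symm hzi) (G.adj_symm (hΦadj i))]
      exact (hcol i).symm
  rcases hx with hx | ⟨i, rfl⟩ <;> rcases hy with hy | ⟨j, rfl⟩
  · rw [hnbr x hx, hnbr y hy]; exact hproper x y hxy
  · rw [hnbr x hx, hΦ.extend_apply]; exact hmixed x hx j hxy
  · rw [hΦ.extend_apply, hnbr y hy]; exact (hmixed y hy i (G.adj_symm hxy)).symm
  · rw [hΦ.extend_apply, hΦ.extend_apply]
    intro hij
    by_cases howner_eq : owner i = owner j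
    · exact hxy.ne (congrArg Φ (hcol_inj i j howner_eq hij))
    · exact hG.not_adj_of_ne (howner i) (howner j) howner_eq (hΦadj i) (hΦadj j) (hΦnbr i)
        (hΦnbr j) hxy

lemma reachableWithin_insert_neighborSet_union_range {u : V} {ι : Type*} {Φ : ι → V}
    {owner : ι → V} (howner : ∀ i, G.Adj u (owner i)) (hΦ : ∀ i, G.Adj (owner i) (Φ i)) :
    G.ReachableWithin (insert u (G.neighborSet u) ∪ Set.range Φ) := by
  refine reachableWithin_of_reachable_center (.inl (.inl rfl)) ?_
  rintro x ((rfl | hx) | ⟨i, rfl⟩)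
  · rfl
  · exact Adj.reachable (G := G.induce _) hx
  · have hu_w : (G.induce (insert u (G.neighborSet u) ∪ Set.range Φ)).Adj ⟨u, .inl (.inl rfl)⟩
        ⟨owner i, .inl (.inr (howner i))⟩ := howner i
    have hw_Φ : (G.induce (insert u (G.neighborSet u) ∪ Set.range Φ)).Adj
        ⟨owner i, .inl (.inr (howner i))⟩ ⟨Φ i, .inr ⟨i, rfl⟩⟩ := hΦ i
    exact hu_w.reachable.trans hw_Φ.reachable

lemma CyclesSpanCliques.exists_coloring_extend_privateNeighbors [Finite V]
    (hG : G.CyclesSpanCliques) {n : ℕ} (hω : G.cliqueNum ≤ n) {u : V} {ι : Type*} {Φ : ι → V}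
    (hΦ : Function.Injective Φ) {owner : ι → V} {col : ι → ℕ} {c : V → ℕ}
    (hrange : ∀ x, c x ∈ Set.Icc 1 n) (hproper : ∀ x y, G.Adj x y → c x ≠ c y)
    (howner : ∀ i, G.Adj u (owner i)) (hΦadj : ∀ i, G.Adj (owner i) (Φ i))
    (hΦnbr : ∀ i, Φ i ∉ insert u (G.neighborSet u)) (hcol_range : ∀ i, col i ∈ Set.Icc 1 n)
    (hcol : ∀ i, col i ≠ c (owner i))
    (hcol_inj : ∀ i j, owner i = owner j → col i = col j → i = j) :
    ∃ c' : V → ℕ, (∀ x, c' x ∈ Set.Icc 1 n) ∧ (∀ x y, G.Adj x y → c' x ≠ c' y) ∧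
      Set.EqOn c' c (insert u (G.neighborSet u)) ∧ ∀ i, c' (Φ i) = col i := by
  have hnbr : ∀ x ∈ insert u (G.neighborSet u), Function.extend Φ col c x = c x := fun x hx =>
    Function.extend_apply' _ _ _ (by rintro ⟨i, rfl⟩; exact hΦnbr i hx)
  obtain ⟨c', hc', hrange', hproper'⟩ := hG.exists_extend_coloring hω
    (reachableWithin_insert_neighborSet_union_range howner hΦadj) (c := Function.extend Φ col c)
    (by
      rintro x (hx | ⟨i, rfl⟩)
      · rw [hnbr x hx]; exact hrange x
      · rw [hΦ.extend_apply]; exact hcol_range i)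
    (fun x hx y hy hxy => hG.extend_ne_of_adj hΦ hproper howner hΦadj hΦnbr hcol hcol_inj hx hy hxy)
  exact ⟨c', hrange', hproper', fun x hx => (hc' (.inl hx)).trans (hnbr x hx),
    fun i => (hc' (.inr ⟨i, rfl⟩)).trans (hΦ.extend_apply _ _ _)⟩

lemma CyclesSpanCliques.exists_coloring_realizing_missing [Finite V] (hG : G.CyclesSpanCliques)
    {u : V} {s : Set V} (hs : s ⊆ G.neighborSet u) {k : ℕ}
    (hdeg : ∀ w ∈ s, k ≤ (G.neighborSet w).ncard) (hω : G.cliqueNum ≤ k + 1) {c₁ : V → ℕ}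
    (hc₁u : c₁ u = k + 1) (hc₁range : ∀ x, c₁ x ∈ Set.Icc 1 (k + 1))
    (hc₁proper : ∀ x y, G.Adj x y → c₁ x ≠ c₁ y) :
    ∃ c : V → ℕ, (∀ x, c x ∈ Set.Icc 1 (k + 1)) ∧ (∀ x y, G.Adj x y → c x ≠ c y) ∧
      Set.EqOn c c₁ (insert u (G.neighborSet u)) ∧
      ∀ w ∈ s, ∀ j ∈ Set.Icc 1 k \ c₁ '' insert w (G.neighborSet w ∩ G.neighborSet u),
        ∃ x, G.Adj w x ∧ c x = j := by
  classical
  have : Nonempty V := ⟨u⟩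
  set Q := insert u (G.neighborSet u)
  set missing : V → Set ℕ :=
    fun w => Set.Icc 1 k \ c₁ '' insert w (G.neighborSet w ∩ G.neighborSet u)
  have : ∀ w ∈ s, ∃ f : ℕ → V, missing w ⊆ f ⁻¹' (G.neighborSet w \ Q) ∧ Set.InjOn f (missing w) :=
    fun w hw => (Set.toFinite _).exists_injOn_of_encard_le (by
      rw [← (Set.toFinite _).cast_ncard_eq, ← (Set.toFinite _).cast_ncard_eq, Nat.cast_le]
      exact hG.ncard_missing_le (hs hw) hc₁u hc₁range hc₁proper (hdeg w hw))
  choose! φ hφ hφinj using this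
  -- `p = (w, j)` indexes the private neighbour of `w` that is to receive its missing colour `j`.
  let ι := {p : V × ℕ // p.1 ∈ s ∧ p.2 ∈ missing p.1}
  let Φ : ι → V := fun p => φ p.1.1 p.1.2
  have hΦ : ∀ p : ι, Φ p ∈ G.neighborSet p.1.1 \ Q := fun p => hφ p.1.1 p.2.1 p.2.2
  have hΦinj : Function.Injective Φ := by
    rintro ⟨⟨w, m⟩, hw, hm⟩ ⟨⟨w', m'⟩, hw', hm'⟩ h
    obtain rfl : w = w' := hG.eq_of_adj_of_adj (hΦ _).2 (hs hw) (hs hw')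
      (G.adj_symm (hΦ ⟨_, hw, hm⟩).1) (h ▸ G.adj_symm (hΦ ⟨_, hw', hm'⟩).1)
    obtain rfl : m = m' := hφinj w hw hm hm' h
    rfl
  obtain ⟨c, hrange, hproper, hcQ, hcΦ⟩ := hG.exists_coloring_extend_privateNeighbors hω hΦinj
    hc₁range hc₁proper (fun p => hs p.2.1) (fun p => (hΦ p).1) (fun p => (hΦ p).2)
    (fun p => Set.Icc_subset_Icc_right (Nat.le_succ k) p.2.2.1)
    (fun p h => p.2.2.2 ⟨_, .inl rfl, h.symm⟩) (fun p q h h' => Subtype.ext (Prod.ext h h'))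
  exact ⟨c, hrange, hproper, hcQ, fun w hw j hj =>
    ⟨Φ ⟨(w, j), hw, hj⟩, (hΦ ⟨(w, j), hw, hj⟩).1, hcΦ _⟩⟩

theorem CyclesSpanCliques.exists_isBStarColoring [Finite V] (hG : G.CyclesSpanCliques) {u : V}
    {s : Set V} (hs : s ⊆ G.neighborSet u) {k : ℕ} (hsk : s.ncard = k)
    (hdeg : ∀ w ∈ s, k ≤ (G.neighborSet w).ncard) (hω : G.cliqueNum ≤ k + 1) :
    ∃ c, IsBStarColoring G (k + 1) c := by
  obtain ⟨c₁, hc₁u, hc₁s, hc₁range, hc₁proper⟩ := hG.exists_coloring_bijOn_neighbors hs hsk hω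
  obtain ⟨c, hrange, hproper, hcc₁, hmissing⟩ :=
    hG.exists_coloring_realizing_missing hs hdeg hω hc₁u hc₁range hc₁proper
  have hcu : c u = k + 1 := (hcc₁ (.inl rfl)).trans hc₁u
  have hcs : Set.EqOn c c₁ s := fun w hw => hcc₁ (.inr (hs hw))
  refine ⟨c, isBStarColoring_of_isBVertex hs hrange hproper hcu
    (hc₁s.surjOn.congr hcs.symm) fun w hw j hj hjw => ?_⟩
  rw [hcs hw] at hjw
  by_cases hju : j = c u
  · exact ⟨u, G.adj_symm (hs hw), hju.symm⟩
  by_cases hjA : j ∈ c₁ '' insert w (G.neighborSet w ∩ G.neighborSet u)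
  · obtain ⟨a, rfl | ha, rfl⟩ := hjA
    · exact absurd rfl hjw
    · exact ⟨a, ha.1, hcc₁ (.inr ha.2)⟩
  · exact hmissing w hw j ⟨⟨hj.1, by grind⟩, hjA⟩

lemma CyclesSpanCliques.mStar_add_one_le_bStar [Finite V] [Nonempty V] (hG : G.CyclesSpanCliques) :
    mStar G + 1 ≤ bStar G := by
  obtain ⟨u, s, hs, hcard, hdeg⟩ : mStar G ∈ _ :=
    Nat.sSup_mem ⟨0, Classical.arbitrary V, ∅, by simp, rfl, by simp⟩ (mStar_bddAbove G)
  obtain ⟨c, hc⟩ := hG.exists_isBStarColoring hs (by rw [Set.ncard_coe_finset, hcard]) hdeg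
    (cliqueNum_le_mStar_add_one G)
  exact le_csSup ⟨mStar G + 1, fun _ ⟨_, hc⟩ => hc.le_mStar_add_one⟩ ⟨c, hc⟩

end SimpleGraph

/-- every block graph is b*-monotonic: for nested induced subgraphs
`G[s₂] ⊆ G[s₁]` (with `s₂` nonempty), `b*(G[s₂]) ≤ b*(G[s₁])`. -/
theorem blockGraph_bStar_monotonic [Fintype V] (G : SimpleGraph V) (hbg : IsBlockGraph G) :
    ∀ s₁ s₂ : Set V, s₂ ⊆ s₁ → s₂.Nonempty →
      bStar (G.induce s₂) ≤ bStar (G.induce s₁) := by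
  intro s₁ s₂ h₂₁ hne
  have : Nonempty s₁ := (hne.mono h₂₁).to_subtype
  calc bStar (G.induce s₂) ≤ mStar (G.induce s₂) + 1 := bStar_le_mStar_add_one _
    _ ≤ mStar (G.induce s₁) + 1 :=
      Nat.add_le_add_right (mStar_le_of_embedding (SimpleGraph.induceHomOfLE G h₂₁)) 1
    _ ≤ bStar (G.induce s₁) := (hbg.cyclesSpanCliques.induce s₁).mStar_add_one_le_bStar
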